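/- arXiv:1701.07721 — 5 statements merged into one kernel-verified Lean document; each statement's English description precedes it below -/
import Mathlib

section
/- Let R be a commutative noetherian ring with unity, let a be an ideal of R, and let M be an R-module. If the R-module M/aM is finitely generated, then the a-adic completion M̂^a of M is a finitely generated module over the a-adic completion R̂^a of R. -/
/-!
Lift generators of `M/aM` to `M` to get a map `f : Rⁿ → M` that is surjective modulo `aM`.
Successive approximation shows that such an `f` stays surjective after completion, and the
completion of the finite module `Rⁿ` is finite over `R̂`, being a quotient of `R̂ ⊗[R] Rⁿ`.
-/

namespace AdicCompletion

variable {R : Type*} [CommRing R] (I : Ideal R)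
variable {M : Type*} [AddCommGroup M] [Module R M]

theorem finite_of_finite (N : Type*) [AddCommGroup N] [Module R N] [Module.Finite R N] :
    Module.Finite (AdicCompletion I R) (AdicCompletion I N) :=
  Module.Finite.of_surjective (ofTensorProduct I N) (ofTensorProduct_surjective_of_finite I N)

theorem finite_of_mkQ_comp_surjective {N : Type*} [AddCommGroup N] [Module R N]
    [Module.Finite R N] {f : N →ₗ[R] M}
    (hf : Function.Surjective ((I • ⊤ : Submodule R M).mkQ ∘ₗ f)) :
    Module.Finite (AdicCompletion I R) (AdicCompletion I M) :=
  have := finite_of_finite I N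
  Module.Finite.of_surjective (map I f) (map_surjective_of_mkQ_comp_surjective hf)

end AdicCompletion

theorem Submodule.exists_fin_mkQ_comp_surjective {R : Type*} [CommRing R]
    {M : Type*} [AddCommGroup M] [Module R M] (N : Submodule R M) [Module.Finite R (M ⧸ N)] :
    ∃ (n : ℕ) (f : (Fin n → R) →ₗ[R] M), Function.Surjective (N.mkQ ∘ₗ f) := by
  obtain ⟨n, p, hp⟩ := Module.Finite.exists_fin' R (M ⧸ N)
  obtain ⟨f, hf⟩ := Module.projective_lifting_property N.mkQ p N.mkQ_surjective
  exact ⟨n, f, hf ▸ hp⟩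

theorem adicCompletion_finite_of_quotient_finite_general
    {R : Type*} [CommRing R] (a : Ideal R)
    (M : Type*) [AddCommGroup M] [Module R M]
    (h : Module.Finite R (M ⧸ (a • ⊤ : Submodule R M))) :
    Module.Finite (AdicCompletion a R) (AdicCompletion a M) := by
  obtain ⟨n, f, hf⟩ := (a • ⊤ : Submodule R M).exists_fin_mkQ_comp_surjective
  exact AdicCompletion.finite_of_mkQ_comp_surjective a hf

/-- If `M/aM` is a finitely generated `R`-module, then the `a`-adic completion of `M`
is a finitely generated module over the `a`-adic completion of `R`. -/
theorem adicCompletion_finite_of_quotient_finite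
    {R : Type*} [CommRing R] [IsNoetherianRing R] (a : Ideal R)
    (M : Type*) [AddCommGroup M] [Module R M]
    (h : Module.Finite R (M ⧸ (a • ⊤ : Submodule R M))) :
    Module.Finite (AdicCompletion a R) (AdicCompletion a M) :=
  adicCompletion_finite_of_quotient_finite_general a M h
end

section
/- Let R be a commutative noetherian ring with unity, let a be an ideal of R, let M be an a-adically quasi-complete R-module, and let f : M → N be a surjective R-module homomorphism. Then N is a-adically quasi-complete, i.e. the completion map θ_N : N → N̂^a is surjective. -/
theorem AdicCompletion.map_of' {R : Type*} [CommRing R] (a : Ideal R)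
    {M N : Type*} [AddCommGroup M] [Module R M] [AddCommGroup N] [Module R N]
    (f : M →ₗ[R] N) (x : M) :
    AdicCompletion.map a f (AdicCompletion.of a M x) = AdicCompletion.of a N (f x) := by
  ext n
  simp [AdicCompletion.map_val_apply, AdicCompletion.of_apply,
    LinearMap.reduceModIdeal_apply]

/-- Any homomorphic image of an `a`-adically quasi-complete module is
`a`-adically quasi-complete. -/
theorem quasiComplete_of_surjective
    {R : Type*} [CommRing R] [IsNoetherianRing R] (a : Ideal R)
    {M N : Type*} [AddCommGroup M] [Module R M] [AddCommGroup N] [Module R N]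
    (hM : Function.Surjective (AdicCompletion.of a M))
    (f : M →ₗ[R] N) (hf : Function.Surjective f) :
    Function.Surjective (AdicCompletion.of a N) := by
  intro y
  obtain ⟨x, hx⟩ := AdicCompletion.map_surjective a hf y
  obtain ⟨m, hm⟩ := hM x
  exact ⟨f m, by rw [← AdicCompletion.map_of', hm, hx]⟩
end

section
/- Let R be a commutative noetherian ring with unity, let a be an ideal of R, and let f : M → N be an R-module homomorphism where both M and N are a-adically complete. Then ker f is an a-adically complete R-module. -/
/-!
Write `K = ker f`. Hausdorffness passes from `M` to its submodule `K`. A Cauchy sequence in `K`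
converges in `M` to a point of `K`, but since `aⁿM ∩ K` may be larger than `aⁿK` this does not
yet give convergence in `K`. Instead pick generators `g₁, …, gᵣ` of `a`; along a subsequence the
successive differences are `∑ᵢ gᵢⁿ zₙᵢ` with `zₙᵢ ∈ K`, so it suffices to solve
`xₙ = gᵢ xₙ₊₁ + zₙᵢ` in `K`: then `x₀ = ∑_{j<n} gᵢʲ zⱼᵢ + gᵢⁿ xₙ` has its tail in `aⁿK`.
In `M` the solution is the series `xₙ = ∑ⱼ gᵢʲ zₙ₊ⱼ,ᵢ`, and it lies in `K` because
`f xₙ = gᵢ f xₙ₊₁` lies in `⋂ₜ aᵗN = 0`.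
-/

open Submodule Finset

section

variable {R : Type*} [CommRing R] {I : Ideal R}
variable {M N : Type*} [AddCommGroup M] [Module R M] [AddCommGroup N] [Module R N]

theorem IsHausdorff.of_injective [IsHausdorff I N] {f : M →ₗ[R] N}
    (hf : Function.Injective f) : IsHausdorff I M := by
  refine ⟨fun x hx => hf ?_⟩
  rw [map_zero]
  refine IsHausdorff.haus ‹_› (f x) fun n => ?_
  simpa using ((hx n).map f).mono (by rw [map_smul'']; exact smul_mono_right _ le_top)

theorem IsHausdorff.eq_zero_of_eq_smul_succ [IsHausdorff I M] {g : R} (hg : g ∈ I)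
    {v : ℕ → M} (hv : ∀ n, v n = g • v (n + 1)) (n : ℕ) : v n = 0 := by
  refine IsHausdorff.haus ‹_› _ fun t => SModEq.zero.mpr ?_
  induction t generalizing n with
  | zero => simp
  | succ t ih =>
    rw [hv n, pow_succ', Submodule.mul_smul]
    exact smul_mem_smul hg (ih (n + 1))

theorem IsPrecomplete.exists_sum_range_smodEq [IsPrecomplete I M] {z : ℕ → M}
    (hz : ∀ n, z n ∈ (I ^ n • ⊤ : Submodule R M)) :
    ∃ L, ∀ n, ∑ j ∈ range n, z j ≡ L [SMOD (I ^ n • ⊤ : Submodule R M)] :=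
  IsPrecomplete.prec ‹_› <|
    (AdicCompletion.isAdicCauchy_iff I M fun n => ∑ j ∈ range n, z j).mpr fun n => by
      simpa [sum_range_succ, SModEq.sub_mem] using hz n

theorem IsAdicComplete.exists_eq_smul_succ_add [IsAdicComplete I M] {g : R} (hg : g ∈ I)
    (y : ℕ → M) : ∃ x : ℕ → M, ∀ n, x n = g • x (n + 1) + y n := by
  choose x hx using fun n => IsPrecomplete.exists_sum_range_smodEq (I := I)
    (z := fun j => g ^ j • y (n + j)) fun j => smul_mem_smul (Ideal.pow_mem_pow hg j) mem_top
  refine ⟨x, fun n => (IsHausdorff.eq_iff_smodEq (I := I)).mpr fun t => ?_⟩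
  calc x n ≡ ∑ j ∈ range (t + 1), g ^ j • y (n + j) [SMOD (I ^ t • ⊤ : Submodule R M)] :=
        ((hx n (t + 1)).mono (pow_smul_top_le I M t.le_succ)).symm
    _ = g • ∑ j ∈ range t, g ^ j • y (n + 1 + j) + y n := by
        simp [sum_range_succ', smul_sum, pow_succ', mul_smul, add_assoc, add_comm 1]
    _ ≡ g • x (n + 1) + y n [SMOD (I ^ t • ⊤ : Submodule R M)] :=
        ((hx (n + 1) t).smul g).add .rfl

theorem LinearMap.exists_ker_eq_smul_succ_add [IsAdicComplete I M] [IsHausdorff I N]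
    (f : M →ₗ[R] N) {g : R} (hg : g ∈ I) (y : ℕ → ker f) :
    ∃ x : ℕ → ker f, ∀ n, x n = g • x (n + 1) + y n := by
  obtain ⟨x, hx⟩ := IsAdicComplete.exists_eq_smul_succ_add hg fun n => (y n : M)
  have hfx : ∀ n, f (x n) = 0 := IsHausdorff.eq_zero_of_eq_smul_succ hg fun n => by
    rw [hx n, map_add, map_smul, LinearMap.mem_ker.mp (y n).2, add_zero]
  exact ⟨fun n => ⟨x n, hfx n⟩, fun n => Subtype.ext (hx n)⟩

theorem eq_sum_range_add_pow_smul {g : R} {x y : ℕ → M} (h : ∀ n, x n = g • x (n + 1) + y n)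
    (n : ℕ) : x 0 = ∑ j ∈ range n, g ^ j • y j + g ^ n • x n := by
  induction n with
  | zero => simp
  | succ n ih => rw [ih, h n, sum_range_succ, smul_add, smul_smul, ← pow_succ]; abel

theorem Submodule.exists_sum_smul_of_mem_span_range_smul_top {ι : Type*} [Fintype ι]
    {g : ι → R} {x : M} (hx : x ∈ Ideal.span (Set.range g) • (⊤ : Submodule R M)) :
    ∃ z : ι → M, x = ∑ i, g i • z i := by
  refine smul_induction_on hx (fun r hr m _ => ?_) fun x y ⟨z, hz⟩ ⟨w, hw⟩ => ?_
  · obtain ⟨c, rfl⟩ := Ideal.mem_span_range_iff_exists_fun.mp hr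
    exact ⟨fun i => c i • m, by simp [sum_smul, smul_smul, mul_comm]⟩
  · exact ⟨z + w, by simp [hz, hw, sum_add_distrib]⟩

theorem Ideal.exists_strictMono_pow_le_span_range_pow {ι : Type*} [Finite ι] {g : ι → R}
    (hg : Ideal.span (Set.range g) = I) :
    ∃ φ : ℕ → ℕ, StrictMono φ ∧ ∀ n, I ^ φ n ≤ Ideal.span (Set.range fun i => g i ^ n) := by
  refine Filter.extraction_forall_of_eventually'
    (P := fun n k => I ^ k ≤ Ideal.span (Set.range fun i => g i ^ n)) fun n => ?_
  have hrad : I ≤ (Ideal.span (Set.range fun i => g i ^ n)).radical := by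
    rw [← hg, Ideal.span_le]
    rintro _ ⟨i, rfl⟩
    exact ⟨n, Ideal.subset_span ⟨i, rfl⟩⟩
  obtain ⟨m, hm⟩ :=
    Ideal.exists_pow_le_of_le_radical_of_fg hrad (hg ▸ fg_span (Set.finite_range g))
  exact ⟨m, fun k hk => (Ideal.pow_le_pow_right hk).trans hm⟩

theorem isPrecomplete_of_exists_eq_smul_succ_add {ι : Type*} [Fintype ι] {g : ι → R}
    (hg : Ideal.span (Set.range g) = I)
    (h : ∀ i (y : ℕ → M), ∃ x : ℕ → M, ∀ n, x n = g i • x (n + 1) + y n) :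
    IsPrecomplete I M := by
  refine ⟨fun k hk => ?_⟩
  obtain ⟨φ, hφ, hφI⟩ := Ideal.exists_strictMono_pow_le_span_range_pow hg
  have hd : ∀ n, ∃ z : ι → M, k (φ (n + 1)) - k (φ n) = ∑ i, g i ^ n • z i := fun n =>
    exists_sum_smul_of_mem_span_range_smul_top <| smul_mono_left (hφI n) <| by
      rw [← neg_sub, neg_mem_iff, ← SModEq.sub_mem]
      exact hk (hφ.monotone n.le_succ)
  choose z hz using hd
  choose w hw using fun i => h i fun n => z n i
  refine ⟨k (φ 0) + ∑ i, w i 0, fun n => ?_⟩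
  have htail : k (φ 0) + ∑ i, w i 0 = k (φ n) + ∑ i, g i ^ n • w i n := by
    simp_rw [eq_sum_range_add_pow_smul (hw _) n, sum_add_distrib]
    rw [sum_comm, ← sum_congr rfl fun j _ => hz j, sum_range_sub (fun j => k (φ j))]
    abel
  have hgI (i : ι) : g i ∈ I := hg ▸ Ideal.subset_span ⟨i, rfl⟩
  rw [htail]
  refine (hk hφ.le_apply).trans ?_
  simpa [SModEq.sub_mem] using
    sum_mem fun i _ => Submodule.smul_mem_smul (Ideal.pow_mem_pow (hgI i) n) mem_top

end

/-- If `f : M → N` is a homomorphism of `a`-adically complete modules,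
then `ker f` is `a`-adically complete. -/
theorem kernel_adicComplete_of_complete
    {R : Type*} [CommRing R] [IsNoetherianRing R] (a : Ideal R)
    {M N : Type*} [AddCommGroup M] [Module R M] [AddCommGroup N] [Module R N]
    (hM : Function.Bijective (AdicCompletion.of a M))
    (hN : Function.Bijective (AdicCompletion.of a N))
    (f : M →ₗ[R] N) :
    Function.Bijective (AdicCompletion.of a (LinearMap.ker f)) := by
  rw [AdicCompletion.of_bijective_iff] at hM hN ⊢
  obtain ⟨r, g, hg⟩ := fg_iff_exists_fin_generating_family.mp (IsNoetherian.noetherian a)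
  have hga (i : Fin r) : g i ∈ a := hg ▸ Ideal.subset_span ⟨i, rfl⟩
  exact
    { toIsHausdorff := .of_injective (LinearMap.ker f).injective_subtype
      toIsPrecomplete := isPrecomplete_of_exists_eq_smul_succ_add hg fun i =>
        f.exists_ker_eq_smul_succ_add (hga i) }
end

section
/- Let R be a commutative noetherian ring with unity that is a-adically complete with respect to an ideal a of R, and let M be an R-module that is a-adically quasi-complete and such that M/aM is a finitely generated R-module. Let K = ker θ_M, where θ_M : M → M̂^a is the a-adic completion map. Then K = aK, and consequently the a-adic completion K̂^a of K is the zero module. -/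
/-!
Lifting generators of `M/aM` gives a finitely generated `N ⊆ M` with `N + aM = M`. Since `R` is
complete, so is `Rᵏ`, and the completion of `Rᵏ → M` is surjective; hence every `x ∈ M` agrees
with an element of `N` modulo `K = ⋂ aⁿM`, i.e. `M = N + K`. Then `K ⊆ aⁿ⁺¹M ⊆ aⁿN + aK` for
all `n`, so the image of `K` in `M/aK` lies in `⋂ aⁿN̄`, which vanishes by Krull's intersection
theorem because `N̄` is finitely generated and `a` lies in the Jacobson radical of the complete
ring `R`. Thus `K = aK = aⁿK`, and every quotient `K/aⁿK` is zero.
-/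

open Submodule

namespace AdicCompletion

variable {R : Type*} [CommRing R] {I : Ideal R} {M : Type*} [AddCommGroup M] [Module R M]

theorem ker_of_le_pow_smul_top (n : ℕ) : LinearMap.ker (of I M) ≤ I ^ n • ⊤ := fun x hx => by
  simpa using congrArg (eval I M n) (LinearMap.mem_ker.mp hx)

theorem isPrecomplete_pi {ι : Type*} [Fintype ι] [DecidableEq ι] (M : ι → Type*)
    [∀ j, AddCommGroup (M j)] [∀ j, Module R (M j)] [∀ j, IsPrecomplete I (M j)] :
    IsPrecomplete I (∀ j, M j) := by
  refine of_surjective_iff.mp fun y => ?_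
  choose x hx using fun j => of_surjective I (M j) (pi I M y j)
  refine ⟨x, (piEquivOfFintype I M).injective ?_⟩
  ext1 j
  simp [piEquivOfFintype_apply, pi, map_of, hx]

theorem range_sup_ker_of_eq_top {F : Type*} [AddCommGroup F] [Module R F] [IsPrecomplete I F]
    {f : F →ₗ[R] M} (hf : Function.Surjective ((I • ⊤ : Submodule R M).mkQ ∘ₗ f)) :
    LinearMap.range f ⊔ LinearMap.ker (of I M) = ⊤ := by
  refine eq_top_iff.mpr fun x _ => ?_
  obtain ⟨y', hy'⟩ := map_surjective_of_mkQ_comp_surjective hf (of I M x)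
  obtain ⟨y, rfl⟩ := of_surjective I F y'
  rw [map_of] at hy'
  refine mem_sup.mpr ⟨f y, LinearMap.mem_range_self f y, x - f y, ?_, add_sub_cancel _ _⟩
  rw [LinearMap.mem_ker, map_sub, hy', sub_self]

theorem subsingleton_of_smul_top_eq_top (h : I • (⊤ : Submodule R M) = ⊤) :
    Subsingleton (AdicCompletion I M) := by
  have hpow : ∀ n : ℕ, I ^ n • (⊤ : Submodule R M) = ⊤ := fun n => by
    induction n with
    | zero => rw [pow_zero, Ideal.one_eq_top, top_smul]
    | succ n ih => rw [pow_succ, Submodule.mul_smul, h, ih]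
  have (n : ℕ) : Subsingleton (M ⧸ I ^ n • (⊤ : Submodule R M)) :=
    Submodule.Quotient.subsingleton_iff.mpr (hpow n)
  exact ⟨fun x y => ext fun n => Subsingleton.elim _ _⟩

end AdicCompletion

namespace Submodule

variable {R : Type*} [CommRing R] [IsNoetherianRing R] {I : Ideal R}
  {M : Type*} [AddCommGroup M] [Module R M]

theorem FG.eq_zero_of_forall_mem_pow_smul (hI : I ≤ (⊥ : Ideal R).jacobson) {N : Submodule R M}
    (hN : N.FG) {x : M} (hx : ∀ n : ℕ, x ∈ I ^ n • N) : x = 0 := by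
  have hxN : x ∈ N := by simpa using hx 0
  have : Module.Finite R N := Module.Finite.iff_fg.mpr hN
  have := (IsHausdorff.of_le_jacobson I N hI).haus ⟨x, hxN⟩ fun n =>
    SModEq.zero.mpr ((mem_smul_top_iff (I ^ n) N _).mpr (hx n))
  exact congrArg Subtype.val this

theorem le_smul_of_fg_sup_eq_top (hI : I ≤ (⊥ : Ideal R).jacobson) {N K : Submodule R M}
    (hN : N.FG) (hNK : N ⊔ K = ⊤) (hK : ∀ n : ℕ, K ≤ I ^ n • ⊤) : K ≤ I • K := by
  intro x hx
  let π := (I • K).mkQ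
  suffices π x = 0 by rwa [← LinearMap.mem_ker, ker_mkQ] at this
  refine (hN.map π).eq_zero_of_forall_mem_pow_smul hI fun n => ?_
  have hx' : x ∈ I ^ (n + 1) • N ⊔ I ^ (n + 1) • K := by
    rw [← smul_sup, hNK]; exact hK (n + 1) hx
  obtain ⟨u, hu, w, hw, rfl⟩ := mem_sup.mp hx'
  have hπw : π w = 0 := (Quotient.mk_eq_zero _).mpr
    (smul_mono_left (Ideal.pow_le_self n.succ_ne_zero) hw)
  rw [map_add, hπw, add_zero, ← map_smul'']
  exact mem_map_of_mem (smul_mono_left (Ideal.pow_le_pow_right n.le_succ) hu)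

end Submodule

theorem ker_completion_eq_smul_and_adicCompletion_subsingleton_general
    {R : Type*} [CommRing R] [IsNoetherianRing R] (a : Ideal R)
    (hR : Function.Bijective (AdicCompletion.of a R))
    (M : Type*) [AddCommGroup M] [Module R M]
    (hfin : Module.Finite R (M ⧸ (a • ⊤ : Submodule R M))) :
    a • LinearMap.ker (AdicCompletion.of a M) = LinearMap.ker (AdicCompletion.of a M) ∧
      Subsingleton (AdicCompletion a (LinearMap.ker (AdicCompletion.of a M))) := by
  have : IsAdicComplete a R := AdicCompletion.of_bijective_iff.mp hR
  set K := LinearMap.ker (AdicCompletion.of a M)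
  obtain ⟨k, g, hg⟩ := Module.Finite.exists_fin' R (M ⧸ (a • ⊤ : Submodule R M))
  obtain ⟨f, rfl⟩ := Module.projective_lifting_property (a • ⊤ : Submodule R M).mkQ g
    (mkQ_surjective _)
  have : IsPrecomplete a (Fin k → R) := AdicCompletion.isPrecomplete_pi _
  have hNK : LinearMap.range f ⊔ K = ⊤ := AdicCompletion.range_sup_ker_of_eq_top hg
  have hK : a • K = K := smul_le_right.antisymm <|
    le_smul_of_fg_sup_eq_top (IsAdicComplete.le_jacobson_bot a) (fg_range f) hNK
      AdicCompletion.ker_of_le_pow_smul_top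
  refine ⟨hK, AdicCompletion.subsingleton_of_smul_top_eq_top ?_⟩
  exact eq_top_iff.mpr fun x _ => (mem_smul_top_iff a K x).mpr (hK.symm ▸ x.2)

/-- Suppose `R` is `a`-adically complete, `M` is `a`-adically quasi-complete and `M/aM` is a
finitely generated `R`-module. If `K` is the kernel of the completion map
`θ_M : M → M̂ᵃ`, then `K = aK` and the `a`-adic completion of `K` vanishes. -/
theorem ker_completion_eq_smul_and_adicCompletion_subsingleton
    {R : Type*} [CommRing R] [IsNoetherianRing R] (a : Ideal R)
    (hR : Function.Bijective (AdicCompletion.of a R))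
    (M : Type*) [AddCommGroup M] [Module R M]
    (hM : Function.Surjective (AdicCompletion.of a M))
    (hfin : Module.Finite R (M ⧸ (a • ⊤ : Submodule R M))) :
    a • LinearMap.ker (AdicCompletion.of a M) = LinearMap.ker (AdicCompletion.of a M) ∧
      Subsingleton (AdicCompletion a (LinearMap.ker (AdicCompletion.of a M))) :=
  ker_completion_eq_smul_and_adicCompletion_subsingleton_general a hR M hfin
end

section
/- Let R be a commutative noetherian ring with unity, let a be an ideal of R, and let M be an R-module. If Tor^R_i(R/a, M) is a finitely generated R-module for every i ≥ 0, then Tor^R_i(N, M) is a finitely generated R-module for every finitely generated R-module N with Supp_R(N) ⊆ V(a) and every i ≥ 0. -/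
/-!
Compute `Tor_i(-, M)` as the homology of `- ⊗ P` for a projective resolution `P` of `M`. Since `P`
is flat, a short exact sequence in the first variable gives a long exact homology sequence, so over
a noetherian ring the modules `X` with every `H_i(X ⊗ P)` finitely generated are closed under
extensions, and contain `(R/a)^n` once they contain `R/a`. If `a` kills a finitely generated `X`, a
presentation `0 → L → (R/a)^n → X → 0`, in which `a` kills `L` again, gives finiteness of
`H_i(X ⊗ P)` by induction on `i`. If `a^k` kills `X`, the sequence `0 → aX → X → X/aX → 0` gives it
by induction on `k`; finally `Supp N ⊆ V(a)` means that some power of `a` kills `N`.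
-/

universe u v

open CategoryTheory Limits MonoidalCategory

namespace ModuleCat

variable (R : Type u) [CommRing R]

def isFinite : ObjectProperty (ModuleCat.{v} R) := fun X => Module.Finite R X

instance [IsNoetherianRing R] : (isFinite.{u, v} R).IsSerreClass where
  exists_zero := ⟨.of R PUnit.{v + 1}, isZero_of_subsingleton _,
    inferInstanceAs (Module.Finite R PUnit.{v + 1})⟩
  prop_of_mono f hf hY := by
    have : Module.Finite R _ := hY
    exact Module.Finite.of_injective f.hom ((mono_iff_injective f).mp hf)
  prop_of_epi f hf hX := by
    have : Module.Finite R _ := hX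
    exact Module.Finite.of_surjective f.hom ((epi_iff_surjective f).mp hf)
  prop_X₂_of_shortExact {S} hS h₁ h₃ := by
    have : Module.Finite R _ := h₁
    have : Module.Finite R _ := h₃
    exact Module.Finite.of_exact
      ((ShortComplex.ShortExact.moduleCat_exact_iff_function_exact S).mp hS.exact)
      hS.moduleCat_surjective_g

end ModuleCat

lemma CategoryTheory.ObjectProperty.prop_fin_pi {R : Type u} [Ring R]
    (P : ObjectProperty (ModuleCat.{v} R))
    [P.IsClosedUnderExtensions] [P.IsClosedUnderIsomorphisms] [P.ContainsZero]
    {Q : Type v} [AddCommGroup Q] [Module R Q] (hQ : P (.of R Q)) (n : ℕ) :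
    P (.of R (Fin n → Q)) := by
  induction n with
  | zero => exact P.prop_of_isZero (ModuleCat.isZero_of_subsingleton _)
  | succ n ih =>
    exact P.prop_of_iso
      (ModuleCat.biprodIsoProd _ _ ≪≫ (Fin.consLinearEquiv R fun _ => Q).toModuleIso)
      (P.prop_biprod hQ ih)

lemma Module.Finite.exists_fin_quotient_of_le_annihilator {R M : Type*} [CommRing R]
    [AddCommGroup M] [Module R M] [Module.Finite R M] {a : Ideal R}
    (ha : a ≤ Module.annihilator R M) :
    ∃ (n : ℕ) (π : (Fin n → R ⧸ a) →ₗ[R] M), Function.Surjective π := by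
  have hM : Module.IsTorsionBySet R M a :=
    (Module.isTorsionBySet_iff_subset_annihilator R M).mpr ha
  let := hM.module
  have := hM.isScalarTower (S := R)
  have : Module.Finite (R ⧸ a) M := Module.Finite.of_restrictScalars_finite R _ _
  obtain ⟨n, π, hπ⟩ := Module.Finite.exists_fin' (R ⧸ a) M
  exact ⟨n, π.restrictScalars R, hπ⟩

open ModuleCat

variable {R : Type u} [CommRing R] {ι : Type*} {c : ComplexShape ι}

def tensorComplex (K : HomologicalComplex (ModuleCat.{u} R) c) :
    ModuleCat.{u} R ⥤ HomologicalComplex (ModuleCat.{u} R) c where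
  obj X := ((tensorLeft X).mapHomologicalComplex c).obj K
  map f := (NatTrans.mapHomologicalComplex ((tensoringLeft _).map f) c).app K

instance (K : HomologicalComplex (ModuleCat.{u} R) c) : (tensorComplex K).Additive where
  map_add {_ _ f g} := by
    ext n : 1
    exact MonoidalPreadditive.add_whiskerRight f g

lemma CategoryTheory.ShortComplex.ShortExact.map_tensorComplex
    (K : HomologicalComplex (ModuleCat.{u} R) c) [∀ i, Module.Flat R (K.X i)]
    {S : ShortComplex (ModuleCat.{u} R)} (hS : S.ShortExact) :
    (S.map (tensorComplex K)).ShortExact :=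
  HomologicalComplex.shortExact_of_degreewise_shortExact _ fun i =>
    hS.map_of_exact (tensorRight (K.X i))

namespace tensorComplex

variable [IsNoetherianRing R] (K : HomologicalComplex (ModuleCat.{u} R) c)
  [∀ i, Module.Flat R (K.X i)] {S : ShortComplex (ModuleCat.{u} R)} (hS : S.ShortExact)
include hS

lemma isFinite_homology_X₂ {i : ι} (h₁ : isFinite R (((tensorComplex K).obj S.X₁).homology i))
    (h₃ : isFinite R (((tensorComplex K).obj S.X₃).homology i)) :
    isFinite R (((tensorComplex K).obj S.X₂).homology i) :=
  (isFinite R).prop_X₂_of_exact ((hS.map_tensorComplex K).homology_exact₂ i) h₁ h₃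

lemma isFinite_homology_X₃ {i j : ι} (hij : c.Rel i j)
    (h₂ : isFinite R (((tensorComplex K).obj S.X₂).homology i))
    (h₁ : isFinite R (((tensorComplex K).obj S.X₁).homology j)) :
    isFinite R (((tensorComplex K).obj S.X₃).homology i) :=
  (isFinite R).prop_X₂_of_exact ((hS.map_tensorComplex K).homology_exact₃ i j hij) h₂ h₁

lemma isFinite_homology_X₃_of_not_rel {i : ι} (hi : ∀ j, ¬ c.Rel i j)
    (h₂ : isFinite R (((tensorComplex K).obj S.X₂).homology i)) :
    isFinite R (((tensorComplex K).obj S.X₃).homology i) := by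
  have := hS.epi_g
  have : Epi (((tensorComplex K).map S.g).f i) := (tensorRight (K.X i)).map_epi S.g
  have := HomologicalComplex.epi_homologyMap_of_epi_of_not_rel ((tensorComplex K).map S.g) i hi
  exact (isFinite R).prop_of_epi (HomologicalComplex.homologyMap ((tensorComplex K).map S.g) i) h₂

end tensorComplex

def finiteTensorHomology (K : HomologicalComplex (ModuleCat.{u} R) c) :
    ObjectProperty (ModuleCat.{u} R) :=
  fun X => ∀ i, isFinite R (((tensorComplex K).obj X).homology i)

namespace finiteTensorHomology

variable [IsNoetherianRing R] (K : HomologicalComplex (ModuleCat.{u} R) c)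

instance : (finiteTensorHomology K).IsClosedUnderIsomorphisms where
  of_iso e h i := (isFinite R).prop_of_iso
    ((HomologicalComplex.homologyFunctor _ c i).mapIso ((tensorComplex K).mapIso e)) (h i)

instance : (finiteTensorHomology K).ContainsZero where
  exists_zero := ⟨.of R PUnit, isZero_of_subsingleton _, fun i => (isFinite R).prop_of_isZero
    ((HomologicalComplex.homologyFunctor _ c i).map_isZero
      ((tensorComplex K).map_isZero (isZero_of_subsingleton _)))⟩

instance [∀ i, Module.Flat R (K.X i)] : (finiteTensorHomology K).IsClosedUnderExtensions where
  prop_X₂_of_shortExact hS h₁ h₃ i := tensorComplex.isFinite_homology_X₂ K hS (h₁ i) (h₃ i)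

end finiteTensorHomology

section

open tensorComplex

variable [IsNoetherianRing R] (K : ChainComplex (ModuleCat.{u} R) ℕ) [∀ i, Module.Flat R (K.X i)]
  {a : Ideal R}

theorem isFinite_homology_of_le_annihilator (ha : finiteTensorHomology K (.of R (R ⧸ a)))
    (i : ℕ) (X : Type u) [AddCommGroup X] [Module R X] [Module.Finite R X]
    (hX : a ≤ Module.annihilator R X) :
    isFinite R (((tensorComplex K).obj (.of R X)).homology i) := by
  induction i generalizing X with
  | zero =>
    obtain ⟨n, π, hπ⟩ := Module.Finite.exists_fin_quotient_of_le_annihilator hX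
    exact isFinite_homology_X₃_of_not_rel K (LinearMap.shortExact_shortComplexKer hπ) (by simp)
      ((finiteTensorHomology K).prop_fin_pi ha n 0)
  | succ i ih =>
    obtain ⟨n, π, hπ⟩ := Module.Finite.exists_fin_quotient_of_le_annihilator hX
    have hker : a ≤ Module.annihilator R (LinearMap.ker π) := calc
      a ≤ Module.annihilator R (Fin n → R ⧸ a) := by
        simp [Module.annihilator_pi, Ideal.annihilator_quotient]
      _ ≤ _ := (LinearMap.ker π).subtype.annihilator_le_of_injective
        (LinearMap.ker π).injective_subtype
    exact isFinite_homology_X₃ K (LinearMap.shortExact_shortComplexKer hπ) rfl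
      ((finiteTensorHomology K).prop_fin_pi ha n _) (ih _ hker)

theorem finiteTensorHomology_of_pow_le_annihilator
    (ha : finiteTensorHomology K (.of R (R ⧸ a))) (k : ℕ)
    (X : Type u) [AddCommGroup X] [Module R X] [Module.Finite R X]
    (hX : a ^ k ≤ Module.annihilator R X) : finiteTensorHomology K (.of R X) := by
  induction k generalizing X with
  | zero =>
    have : Subsingleton X := Module.annihilator_eq_top_iff.mp (top_le_iff.mp (by simpa using hX))
    exact (finiteTensorHomology K).prop_of_isZero (isZero_of_subsingleton _)
  | succ k ih =>
    let aX := a • (⊤ : Submodule R X)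
    refine (finiteTensorHomology K).prop_X₂_of_shortExact
      (LinearMap.shortExact_shortComplexKer aX.mkQ_surjective) (ih _ ?_) fun i =>
        isFinite_homology_of_le_annihilator K ha i _ ?_
    · rw [Submodule.ker_mkQ]
      rwa [← Submodule.annihilator_top, Submodule.le_annihilator_iff, pow_succ,
        Submodule.mul_smul, ← Submodule.le_annihilator_iff] at hX
    · exact (Module.isTorsionBySet_iff_subset_annihilator R _).mp
        (Module.isTorsionBySet_quotient_ideal_smul X a)

end

/-- If `Tor_i(R/a, M)` is finitely generated for every `i ≥ 0`, then `Tor_i(N, M)` is finitely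
generated for every finitely generated module `N` with `Supp N ⊆ V(a)` and every `i ≥ 0`. -/
theorem tor_finite_of_tor_quotient_finite
    {R : Type u} [CommRing R] [IsNoetherianRing R] (a : Ideal R)
    (M : Type u) [AddCommGroup M] [Module R M]
    (h : ∀ i : ℕ, Module.Finite R
      (((Tor (ModuleCat.{u} R) i).obj (ModuleCat.of R (R ⧸ a))).obj (ModuleCat.of R M)))
    (N : Type u) [AddCommGroup N] [Module R N] [Module.Finite R N]
    (hN : Module.support R N ⊆ PrimeSpectrum.zeroLocus (a : Set R)) (i : ℕ) :
    Module.Finite R (((Tor (ModuleCat.{u} R) i).obj (ModuleCat.of R N)).obj (ModuleCat.of R M)) := by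
  obtain ⟨P⟩ : Nonempty (ProjectiveResolution (ModuleCat.of R M)) := HasProjectiveResolution.out
  have (n : ℕ) : Module.Flat R (P.complex.X n) := by
    have := P.projective n
    infer_instance
  obtain ⟨k, hk⟩ : ∃ k, a ^ k ≤ Module.annihilator R N := by
    rw [Module.support_eq_zeroLocus, PrimeSpectrum.zeroLocus_subset_zeroLocus_iff] at hN
    exact Ideal.exists_pow_le_of_le_radical_of_fg hN (IsNoetherian.noetherian a)
  have hTor (X : ModuleCat.{u} R) (j : ℕ) :
      ((Tor _ j).obj X).obj (.of R M) ≅ ((tensorComplex P.complex).obj X).homology j :=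
    P.isoLeftDerivedObj _ j
  have ha : finiteTensorHomology P.complex (.of R (R ⧸ a)) := fun j =>
    (isFinite R).prop_of_iso (hTor _ j) (h j)
  exact (isFinite R).prop_of_iso (hTor _ i).symm
    (finiteTensorHomology_of_pow_le_annihilator P.complex ha k N hk i)
end
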